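/- Let q be a self-join-free Boolean conjunctive query containing atoms F and G (F ≠ G) such that F attacks G and G attacks F in the attack graph. For constants a, b define a valuation β_{a,b} on the variables of q by: β_{a,b}(u) = ⊥ if u ∈ F⁺ ∩ G⁺; β_{a,b}(u) = a if u ∈ F⁺ \ G⁺; β_{a,b}(u) = b if u ∈ G⁺ \ F⁺; β_{a,b}(u) = (a,b) otherwise. Then for every atom H ∈ q with H ∉ {F, G} and any constants a, b, a', b': if β_{a,b} and β_{a',b'} agree on key(H), then β_{a,b}(H) = β_{a',b'}(H). -/

import Mathlib

/-- Constants: base constants, a special constant `⊥`, and injective pairing/tripling. -/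
inductive C where
  | base : ℕ → C
  | bot : C
  | pair : C → C → C
  | triple : C → C → C → C
deriving DecidableEq

/-- A fact: relation name, primary-key values, non-key values. -/
structure DBFact where
  rel : ℕ
  key : List C
  rest : List C
deriving DecidableEq

/-- Two facts are key-equal if they have the same relation name and primary-key value. -/
def keyEq (A B : DBFact) : Prop := A.rel = B.rel ∧ A.key = B.key

/-- A term is a variable (inl) or a constant (inr). -/
abbrev Term := ℕ ⊕ C

/-- An atom with key positions and non-key positions. -/
structure Atom where
  rel : ℕ
  key : List Term
  rest : List Term
deriving DecidableEq

def termVars (l : List Term) : Finset ℕ := (l.filterMap fun t => t.getLeft?).toFinset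

/-- Variables at primary-key positions of an atom. -/
def keyVars (F : Atom) : Finset ℕ := termVars F.key

/-- All variables of an atom. -/
def atomVars (F : Atom) : Finset ℕ := termVars F.key ∪ termVars F.rest

/-- A query is self-join-free: no relation name occurs twice. -/
def SJF (q : Finset Atom) : Prop := ∀ F ∈ q, ∀ G ∈ q, F.rel = G.rel → F = G

/-- Apply a valuation to an atom, yielding a fact. -/
def applyVal (θ : ℕ → C) (F : Atom) : DBFact :=
  ⟨F.rel, F.key.map (Sum.elim θ id), F.rest.map (Sum.elim θ id)⟩

/-- Semantic implication of a functional dependency `X → Y` by a set of FDs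
(two-tuple semantics). -/
def FDImplies (fds : Set (Set ℕ × Set ℕ)) (X Y : Set ℕ) : Prop :=
  ∀ θ μ : ℕ → C,
    (∀ p ∈ fds, (∀ v ∈ p.1, θ v = μ v) → ∀ v ∈ p.2, θ v = μ v) →
    (∀ v ∈ X, θ v = μ v) → ∀ v ∈ Y, θ v = μ v

/-- `FD(q) = { key(F) → vars(F) : F ∈ q }`. -/
def FDs (q : Finset Atom) : Set (Set ℕ × Set ℕ) :=
  {p | ∃ F ∈ q, p = ((keyVars F : Set ℕ), (atomVars F : Set ℕ))}

/-- `F⁺ = { x : FD(q \ {F}) ⊨ key(F) → x }`. -/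
def plus (q : Finset Atom) (F : Atom) : Set ℕ :=
  {x | FDImplies (FDs (q.erase F)) (keyVars F : Set ℕ) {x}}

/-- One step of a witness for an attack by `F`. -/
def AttackStep (q : Finset Atom) (F : Atom) (A B : Atom) : Prop :=
  ¬ ((atomVars A ∩ atomVars B : Finset ℕ) : Set ℕ) ⊆ plus q F

/-- `F` attacks `G` in the attack graph of `q`. -/
def Attacks (q : Finset Atom) (F G : Atom) : Prop :=
  F ≠ G ∧ F ∈ q ∧ ∃ L : List Atom, (∀ A ∈ L, A ∈ q) ∧
    List.Chain (AttackStep q F) F L ∧ (F :: L).getLast (List.cons_ne_nil F L) = G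

open Classical in
/-- The valuation `β_{a,b}`: `⊥` on `F⁺ ∩ G⁺`, `a` on `F⁺ \ G⁺`, `b` on `G⁺ \ F⁺`,
and the pair `(a,b)` elsewhere. -/
noncomputable def bval (q : Finset Atom) (F G : Atom) (a b : ℕ) (u : ℕ) : C :=
  if u ∈ plus q F ∩ plus q G then C.bot
  else if u ∈ plus q F then C.base a
  else if u ∈ plus q G then C.base b
  else C.pair (C.base a) (C.base b)

/-!
On `F⁺` the value of `β_{a,b}` does not depend on `b`, and on `G⁺` it does not depend on `a`.
If `key(H) ⊆ G⁺`, then `vars(H) ⊆ G⁺`, because `G⁺` is closed under `key(H) → vars(H)`;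
otherwise some key variable of `H` lies outside `G⁺`, where `β_{a,b}` determines `a`, so `a = a'`.
Symmetrically `b = b'` or `vars(H) ⊆ F⁺`, and each of the four combinations gives agreement on
`vars(H)`.
-/

lemma mem_termVars {v : ℕ} {l : List Term} : v ∈ termVars l ↔ Sum.inl v ∈ l := by
  simp [termVars]

lemma termVars_map_congr {θ θ' : ℕ → C} {l : List Term} (h : ∀ v ∈ termVars l, θ v = θ' v) :
    l.map (Sum.elim θ id) = l.map (Sum.elim θ' id) := by
  refine List.map_congr_left fun t ht => ?_
  cases t with
  | inl v => exact h v (mem_termVars.2 ht)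
  | inr c => rfl

lemma applyVal_congr {θ θ' : ℕ → C} {H : Atom} (h : ∀ v ∈ atomVars H, θ v = θ' v) :
    applyVal θ H = applyVal θ' H := by
  simp only [applyVal, atomVars, Finset.mem_union] at h ⊢
  rw [termVars_map_congr fun v hv => h v (Or.inl hv),
    termVars_map_congr fun v hv => h v (Or.inr hv)]

lemma atomVars_subset_plus {q : Finset Atom} {F H : Atom} (hH : H ∈ q.erase F)
    (hk : (keyVars H : Set ℕ) ⊆ plus q F) : (atomVars H : Set ℕ) ⊆ plus q F := by
  intro x hx θ μ hfds hkey v hv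
  rw [Set.mem_singleton_iff.1 hv]
  exact hfds _ ⟨H, hH, rfl⟩ (fun w hw => hk hw θ μ hfds hkey w rfl) x hx

section bval

variable {q : Finset Atom} {F G : Atom} {a b a' b' u : ℕ}

lemma bval_eq_of_mem_plus_left (hu : u ∈ plus q F) :
    bval q F G a b u = bval q F G a b' u := by
  unfold bval
  split_ifs <;> simp_all

lemma bval_eq_of_mem_plus_right (hu : u ∈ plus q G) :
    bval q F G a b u = bval q F G a' b u := by
  unfold bval
  split_ifs <;> simp_all

lemma eq_of_bval_eq_of_not_mem_plus_left (hu : u ∉ plus q F)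
    (h : bval q F G a b u = bval q F G a' b' u) : b = b' := by
  unfold bval at h
  split_ifs at h <;> simp_all

lemma eq_of_bval_eq_of_not_mem_plus_right (hu : u ∉ plus q G)
    (h : bval q F G a b u = bval q F G a' b' u) : a = a' := by
  unfold bval at h
  split_ifs at h <;> simp_all

lemma eq_or_atomVars_subset_plus_left {H : Atom} (hH : H ∈ q.erase F)
    (hkey : ∀ v ∈ keyVars H, bval q F G a b v = bval q F G a' b' v) :
    b = b' ∨ (atomVars H : Set ℕ) ⊆ plus q F := by
  by_cases hk : (keyVars H : Set ℕ) ⊆ plus q F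
  · exact Or.inr (atomVars_subset_plus hH hk)
  · obtain ⟨v, hv, hvF⟩ := Set.not_subset.1 hk
    exact Or.inl (eq_of_bval_eq_of_not_mem_plus_left hvF (hkey v hv))

lemma eq_or_atomVars_subset_plus_right {H : Atom} (hH : H ∈ q.erase G)
    (hkey : ∀ v ∈ keyVars H, bval q F G a b v = bval q F G a' b' v) :
    a = a' ∨ (atomVars H : Set ℕ) ⊆ plus q G := by
  by_cases hk : (keyVars H : Set ℕ) ⊆ plus q G
  · exact Or.inr (atomVars_subset_plus hH hk)
  · obtain ⟨v, hv, hvG⟩ := Set.not_subset.1 hk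
    exact Or.inl (eq_of_bval_eq_of_not_mem_plus_right hvG (hkey v hv))

end bval

theorem bval_consistent_outside_general (q : Finset Atom) (F G : Atom) :
    ∀ H ∈ q, H ≠ F → H ≠ G → ∀ a b a' b' : ℕ,
      (∀ v ∈ keyVars H, bval q F G a b v = bval q F G a' b' v) →
      applyVal (bval q F G a b) H = applyVal (bval q F G a' b') H := by
  intro H hH hHF hHG a b a' b' hkey
  refine applyVal_congr fun v hv => ?_
  rcases eq_or_atomVars_subset_plus_right (Finset.mem_erase.2 ⟨hHG, hH⟩) hkey with rfl | hG <;>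
    rcases eq_or_atomVars_subset_plus_left (Finset.mem_erase.2 ⟨hHF, hH⟩) hkey with rfl | hF
  · rfl
  · exact bval_eq_of_mem_plus_left (hF hv)
  · exact bval_eq_of_mem_plus_right (hG hv)
  · exact (bval_eq_of_mem_plus_right (hG hv)).trans (bval_eq_of_mem_plus_left (hF hv))

/-- If `F` and `G` attack each other, then for every atom `H ∉ {F, G}`, whenever
`β_{a,b}` and `β_{a',b'}` agree on `key(H)`, they produce the same fact from `H`. -/
theorem bval_consistent_outside (q : Finset Atom) (hq : SJF q) (F G : Atom)
    (hFG : F ≠ G) (h1 : Attacks q F G) (h2 : Attacks q G F) :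
    ∀ H ∈ q, H ≠ F → H ≠ G → ∀ a b a' b' : ℕ,
      (∀ v ∈ keyVars H, bval q F G a b v = bval q F G a' b' v) →
      applyVal (bval q F G a b) H = applyVal (bval q F G a' b') H :=
  bval_consistent_outside_general q F G
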